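/- arXiv:1601.04774 — 5 statements merged into one kernel-verified Lean document; each statement's English description precedes it below -/
import Mathlib

section
/- Let K be an odd natural number with K ≥ 1, let n be an odd natural number, and let l₀ > 0 be a real number. Suppose u : ZMod K → (ℝ → ℝ) assigns to each i a twice differentiable function uᵢ satisfying uᵢ''(x) = -(n·π/l₀)² · uᵢ(x) for all x ∈ ℝ, and suppose the cyclic continuity condition uᵢ(l₀) = u_{i+1}(0) holds for all i ∈ ZMod K. Then uᵢ(0) = 0 and uᵢ(l₀) = 0 for all i ∈ ZMod K. -/
private lemma flip_lemma (n : ℕ) (hn : Odd n) (l₀ : ℝ) (hl₀ : 0 < l₀)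
    (f : ℝ → ℝ) (hdiff : Differentiable ℝ f) (hdiff' : Differentiable ℝ (deriv f))
    (hODE : ∀ x : ℝ, deriv (deriv f) x = -((n * Real.pi / l₀) ^ 2) * f x) :
    f l₀ = - f 0 := by
  set ω : ℝ := n * Real.pi / l₀ with hω
  have hn0 : 0 < (n : ℝ) := by exact_mod_cast hn.pos
  have hωpos : 0 < ω := by
    apply div_pos _ hl₀
    positivity
  set W : ℝ → ℝ := fun x => deriv f x * Real.sin (ω * x) - ω * f x * Real.cos (ω * x) with hWdef
  have hWderiv : ∀ x, HasDerivAt W 0 x := by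
    intro x
    have h1 : HasDerivAt (fun x : ℝ => ω * x) ω x := by
      simpa using (hasDerivAt_id x).const_mul ω
    have hsin : HasDerivAt (fun x => Real.sin (ω * x)) (Real.cos (ω * x) * ω) x :=
      (Real.hasDerivAt_sin (ω * x)).comp x h1
    have hcos : HasDerivAt (fun x => Real.cos (ω * x)) (-Real.sin (ω * x) * ω) x :=
      (Real.hasDerivAt_cos (ω * x)).comp x h1
    have hf : HasDerivAt f (deriv f x) x := (hdiff x).hasDerivAt
    have hf' : HasDerivAt (deriv f) (deriv (deriv f) x) x := (hdiff' x).hasDerivAt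
    have h := (hf'.mul hsin).sub ((hf.const_mul ω).mul hcos)
    refine h.congr_deriv ?_
    rw [hODE x]
    ring
  have hWconst : W l₀ = W 0 :=
    is_const_of_deriv_eq_zero (fun x => (hWderiv x).differentiableAt)
      (fun x => (hWderiv x).deriv) l₀ 0
  have hωl : ω * l₀ = n * Real.pi := by
    rw [hω]; field_simp [hl₀.ne']
  have hsin0 : Real.sin (ω * l₀) = 0 := by rw [hωl]; exact Real.sin_nat_mul_pi n
  have hcos0 : Real.cos (ω * l₀) = -1 := by
    have := Real.cos_nat_mul_pi_sub 0 n
    simp [hn.neg_one_pow] at this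
    rw [hωl, this]
  have h0 : W 0 = -(ω * f 0) := by simp [hWdef]
  have hl : W l₀ = ω * f l₀ := by
    rw [hWdef]; simp only [hsin0, hcos0]; ring
  have : ω * f l₀ = -(ω * f 0) := by rw [← hl, ← h0, hWconst]
  have := mul_left_cancel₀ (ne_of_gt hωpos) (by linarith [this] : ω * f l₀ = ω * (- f 0))
  exact this

/-- A solution of `-u'' = (nπ/l₀)² u` (n odd) on a cycle of an odd number `K` of edges of
length `l₀`, continuous at the vertices, vanishes at every vertex of the cycle. -/
theorem odd_cycle_vanishing (K : ℕ) (hK1 : 1 ≤ K) (hK : Odd K) (n : ℕ) (hn : Odd n)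
    (l₀ : ℝ) (hl₀ : 0 < l₀) (u : ZMod K → ℝ → ℝ)
    (hdiff : ∀ i, Differentiable ℝ (u i))
    (hdiff' : ∀ i, Differentiable ℝ (deriv (u i)))
    (hODE : ∀ i, ∀ x : ℝ, deriv (deriv (u i)) x = -((n * Real.pi / l₀) ^ 2) * u i x)
    (hcont : ∀ i : ZMod K, u i l₀ = u (i + 1) 0) :
    ∀ i : ZMod K, u i 0 = 0 ∧ u i l₀ = 0 := by
  have hflip : ∀ i, u i l₀ = - u i 0 := fun i =>
    flip_lemma n hn l₀ hl₀ (u i) (hdiff i) (hdiff' i) (hODE i)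
  have hstep : ∀ i : ZMod K, u (i + 1) 0 = - u i 0 := fun i => by
    rw [← hcont i, hflip i]
  have hiter : ∀ i : ZMod K, ∀ k : ℕ, u (i + k) 0 = (-1 : ℝ) ^ k * u i 0 := by
    intro i k
    induction k with
    | zero => simp
    | succ k ih =>
      have : ((k + 1 : ℕ) : ZMod K) = (k : ZMod K) + 1 := by push_cast; ring
      rw [this, ← add_assoc, hstep (i + k), ih]
      ring
  intro i
  have h := hiter i K
  rw [ZMod.natCast_self, add_zero, hK.neg_one_pow] at h
  have h0 : u i 0 = 0 := by linarith
  exact ⟨h0, by rw [hflip i, h0, neg_zero]⟩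
end

section
/- Let m be a natural number, let n be an odd natural number, and let l₀ > 0 be a real number. Suppose u : Fin (m+1) → (ℝ → ℝ) assigns to each i a twice differentiable function uᵢ satisfying uᵢ''(x) = -(n·π/l₀)² · uᵢ(x) for all x ∈ ℝ, suppose uᵢ(l₀) = u_{i+1}(0) for all i < m, and suppose u₀(0) = 0. Then uᵢ(0) = 0 and uᵢ(l₀) = 0 for all i. -/
open Real

/-- Wronskian of `u` with `sin (ω x)` is constant when `u'' = -ω² u`. -/
lemma wronskian_const (ω : ℝ) (u : ℝ → ℝ)
    (hdiff : Differentiable ℝ u) (hdiff' : Differentiable ℝ (deriv u))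
    (hODE : ∀ x : ℝ, deriv (deriv u) x = -(ω ^ 2) * u x) (x y : ℝ) :
    ω * u x * Real.cos (ω * x) - deriv u x * Real.sin (ω * x)
      = ω * u y * Real.cos (ω * y) - deriv u y * Real.sin (ω * y) := by
  set W : ℝ → ℝ := fun t => ω * u t * Real.cos (ω * t) - deriv u t * Real.sin (ω * t) with hW
  have hderiv : ∀ t : ℝ, HasDerivAt W 0 t := by
    intro t
    have hu : HasDerivAt u (deriv u t) t := (hdiff t).hasDerivAt
    have hu' : HasDerivAt (deriv u) (deriv (deriv u) t) t := (hdiff' t).hasDerivAt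
    have hlin : HasDerivAt (fun s : ℝ => ω * s) ω t := by
      simpa using (hasDerivAt_id t).const_mul ω
    have hc : HasDerivAt (fun s : ℝ => Real.cos (ω * s)) (-Real.sin (ω * t) * ω) t :=
      (Real.hasDerivAt_cos (ω * t)).comp t hlin
    have hs : HasDerivAt (fun s : ℝ => Real.sin (ω * s)) (Real.cos (ω * t) * ω) t :=
      (Real.hasDerivAt_sin (ω * t)).comp t hlin
    have h1 : HasDerivAt (fun s => ω * u s * Real.cos (ω * s))
        ((ω * deriv u t) * Real.cos (ω * t) + (ω * u t) * (-Real.sin (ω * t) * ω)) t :=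
      ((hu.const_mul ω).mul hc)
    have h2 : HasDerivAt (fun s => deriv u s * Real.sin (ω * s))
        (deriv (deriv u) t * Real.sin (ω * t) + deriv u t * (Real.cos (ω * t) * ω)) t :=
      (hu'.mul hs)
    have := h1.sub h2
    refine this.congr_deriv ?_
    rw [hODE t]
    ring
  have hWd : Differentiable ℝ W := fun t => (hderiv t).differentiableAt
  have hz : ∀ t, deriv W t = 0 := fun t => (hderiv t).deriv
  exact is_const_of_deriv_eq_zero hWd hz x y

/-- If `u'' = -(nπ/l₀)² u` with `n` odd, then `u l₀ = - u 0`. -/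
lemma step_neg (n : ℕ) (hn : Odd n) (l₀ : ℝ) (hl₀ : 0 < l₀) (u : ℝ → ℝ)
    (hdiff : Differentiable ℝ u) (hdiff' : Differentiable ℝ (deriv u))
    (hODE : ∀ x : ℝ, deriv (deriv u) x = -((n * Real.pi / l₀) ^ 2) * u x) :
    u l₀ = - u 0 := by
  set ω : ℝ := n * Real.pi / l₀ with hω
  have hωl : ω * l₀ = n * Real.pi := by
    rw [hω]; field_simp [hl₀.ne']
  have hωpos : 0 < ω := by
    have hn1 : (1 : ℝ) ≤ n := by
      exact_mod_cast Nat.one_le_iff_ne_zero.mpr (by rintro rfl; exact (Nat.not_odd_zero) hn)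
    have : (0:ℝ) < n * Real.pi := by positivity
    exact div_pos this hl₀
  have key := wronskian_const ω u hdiff hdiff' hODE l₀ 0
  have hsin : Real.sin (ω * l₀) = 0 := by rw [hωl]; exact Real.sin_nat_mul_pi n
  have hcos : Real.cos (ω * l₀) = -1 := by
    rw [hωl]
    have := Real.cos_nat_mul_pi_sub 0 n
    simpa [Odd.neg_one_pow hn] using this
  rw [hsin, hcos] at key
  simp at key
  have : ω * u l₀ = -(ω * u 0) := by linarith [key]
  have := mul_left_cancel₀ (ne_of_gt hωpos) (by linarith : ω * u l₀ = ω * (- u 0))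
  exact this

/-- Path propagation: a solution of `-u'' = (nπ/l₀)² u` (n odd) on a path of `m+1` edges of
length `l₀`, continuous at interior vertices and vanishing at one endpoint of the path,
vanishes at every vertex of the path. -/
theorem path_propagation (m : ℕ) (n : ℕ) (hn : Odd n) (l₀ : ℝ) (hl₀ : 0 < l₀)
    (u : Fin (m + 1) → ℝ → ℝ)
    (hdiff : ∀ i, Differentiable ℝ (u i))
    (hdiff' : ∀ i, Differentiable ℝ (deriv (u i)))
    (hODE : ∀ i, ∀ x : ℝ, deriv (deriv (u i)) x = -((n * Real.pi / l₀) ^ 2) * u i x)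
    (hcont : ∀ i : Fin m, u i.castSucc l₀ = u i.succ 0)
    (h0 : u 0 0 = 0) :
    ∀ i : Fin (m + 1), u i 0 = 0 ∧ u i l₀ = 0 := by
  have hstep : ∀ i, u i l₀ = - u i 0 := fun i =>
    step_neg n hn l₀ hl₀ (u i) (hdiff i) (hdiff' i) (hODE i)
  have hzero : ∀ i : Fin (m + 1), u i 0 = 0 := by
    intro i
    induction i using Fin.induction with
    | zero => exact h0
    | succ j ih =>
      rw [← hcont j, hstep j.castSucc, ih]
      ring
  intro i
  exact ⟨hzero i, by rw [hstep i, hzero i]; ring⟩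
end

section
/- For all real numbers l_min with 0 < l_min ≤ 1, r > 0, and Λ_max > 0 there exists M > 0 such that the following holds: for every edge length l with l_min ≤ l ≤ 1/l_min, every real λ with |λ| ≤ Λ_max and |λ - (n·π/l)²| ≥ r for all natural numbers n ≥ 1, and every twice differentiable u : ℝ → ℝ with u''(x) = -λ · u(x) for all x ∈ ℝ, one has u'(0)² + u'(l)² ≤ M · (u(0)² + u(l)²). -/
open Real

lemma wronskian_eq (lam : ℝ) (u v w : ℝ → ℝ)
    (hu : Differentiable ℝ u) (hu' : Differentiable ℝ (deriv u))
    (hu'' : ∀ x, deriv (deriv u) x = -lam * u x)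
    (hv : ∀ x, HasDerivAt v (w x) x)
    (hw : ∀ x, HasDerivAt w (-lam * v x) x) (x : ℝ) :
    u x * w x - deriv u x * v x = u 0 * w 0 - deriv u 0 * v 0 := by
  have key : ∀ y : ℝ, HasDerivAt (fun t => u t * w t - deriv u t * v t) 0 y := by
    intro y
    have h1 : HasDerivAt u (deriv u y) y := (hu y).hasDerivAt
    have h2 : HasDerivAt (deriv u) (-lam * u y) y := by
      have h := (hu' y).hasDerivAt
      rwa [hu'' y] at h
    have h3 := (h1.mul (hw y)).sub (h2.mul (hv y))
    refine h3.congr_deriv ?_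
    ring
  have hdiff : Differentiable ℝ (fun t => u t * w t - deriv u t * v t) :=
    fun y => (key y).differentiableAt
  exact is_const_of_deriv_eq_zero hdiff (fun y => (key y).deriv) x 0

lemma div_bound {S X B s₀ : ℝ} (hs₀ : 0 < s₀) (hS : s₀ ≤ |S|) (hB : |S * X| ≤ B) :
    |X| ≤ B / s₀ := by
  rw [le_div_iff₀ hs₀]
  rw [abs_mul] at hB
  nlinarith [abs_nonneg X, abs_nonneg S, mul_le_mul_of_nonneg_left hS (abs_nonneg X)]

lemma sin_lb (ρ T θ : ℝ) (hρ : 0 < ρ) (hθ : 0 < θ) (hT : θ ≤ T)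
    (h : ∀ n : ℕ, 1 ≤ n → ρ ≤ |θ ^ 2 - (n * π) ^ 2|) :
    3 / 4 * min (min θ (ρ / (2 * T + π))) 1 ≤ |Real.sin θ| := by
  have hTpos : 0 < T := lt_of_lt_of_le hθ hT
  have hD : 0 < 2 * T + π := by positivity
  set δ₀ := ρ / (2 * T + π) with hδ₀def
  have hδ₀ : 0 < δ₀ := by positivity
  set n₀ := ⌊θ / π⌋₊ with hn₀def
  have hn₀le : (n₀ : ℝ) * π ≤ θ := by
    have := Nat.floor_le (by positivity : (0:ℝ) ≤ θ / π)
    calc (n₀ : ℝ) * π ≤ θ / π * π := by nlinarith [pi_pos]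
    _ = θ := by field_simp
  have hlt : θ < ((n₀ : ℝ) + 1) * π := by
    have := Nat.lt_floor_add_one (θ / π)
    calc θ = θ / π * π := by field_simp
    _ < ((n₀ : ℝ) + 1) * π := by nlinarith [pi_pos]
  set a := θ - (n₀ : ℝ) * π with hadef
  have ha0 : 0 ≤ a := by simp [hadef]; linarith
  have ha1 : a < π := by simp [hadef]; nlinarith
  have h1 : min θ δ₀ ≤ a := by
    rcases Nat.eq_zero_or_pos n₀ with h0 | h0
    · have : a = θ := by simp [hadef, h0]
      rw [this]; exact min_le_left _ _
    · have hn1 : 1 ≤ n₀ := h0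
      have hsp := h n₀ hn1
      have habs : |θ ^ 2 - (n₀ * π) ^ 2| = θ ^ 2 - ((n₀:ℝ) * π) ^ 2 := by
        apply abs_of_nonneg
        nlinarith [mul_nonneg (Nat.cast_nonneg n₀ : (0:ℝ) ≤ n₀) pi_pos.le]
      rw [habs] at hsp
      have hδa : δ₀ ≤ a := by
        rw [hδ₀def, div_le_iff₀ hD]
        have hn₀T : (n₀ : ℝ) * π ≤ T := le_trans hn₀le hT
        nlinarith [pi_pos]
      exact le_trans (min_le_right _ _) hδa
  have h2 : min θ δ₀ ≤ π - a := by
    have hsp := h (n₀ + 1) (by omega)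
    have hcast : ((n₀ + 1 : ℕ) : ℝ) = (n₀ : ℝ) + 1 := by push_cast; ring
    rw [hcast] at hsp
    have habs : |θ ^ 2 - (((n₀:ℝ) + 1) * π) ^ 2| = (((n₀:ℝ) + 1) * π) ^ 2 - θ ^ 2 := by
      rw [abs_sub_comm]
      apply abs_of_nonneg
      nlinarith [pi_pos, mul_nonneg (Nat.cast_nonneg n₀ : (0:ℝ) ≤ n₀) pi_pos.le]
    rw [habs] at hsp
    have hδa : δ₀ ≤ π - a := by
      rw [hδ₀def, div_le_iff₀ hD]
      have hn₀T : (n₀ : ℝ) * π ≤ T := le_trans hn₀le hT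
      nlinarith [pi_pos]
    exact le_trans (min_le_right _ _) hδa
  have habs_sin : |Real.sin θ| = Real.sin a := by
    have hθeq : θ = a + (n₀ : ℝ) * π := by rw [hadef]; ring
    rw [hθeq, Real.sin_add, Real.sin_nat_mul_pi, mul_zero, add_zero, abs_mul]
    have hcos : |Real.cos ((n₀ : ℝ) * π)| = 1 := by
      have := Real.abs_cos_int_mul_pi (n₀ : ℤ)
      simpa using this
    rw [hcos, mul_one]
    exact abs_of_nonneg (Real.sin_nonneg_of_nonneg_of_le_pi ha0 ha1.le)
  rw [habs_sin]
  set s := min (min θ δ₀) 1 with hsdef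
  have hs0 : 0 < s := lt_min (lt_min hθ hδ₀) one_pos
  have hs1 : s ≤ 1 := min_le_right _ _
  have hsa : s ≤ a := le_trans (min_le_left _ _) h1
  have hsπa : s ≤ π - a := le_trans (min_le_left _ _) h2
  have hspi2 : s ≤ π / 2 := le_trans hs1 (by nlinarith [pi_gt_three])
  have hmono : Real.sin s ≤ Real.sin a := by
    rcases le_or_gt a (π / 2) with hc | hc
    · exact Real.strictMonoOn_sin.monotoneOn ⟨by linarith [pi_pos], hspi2⟩
        ⟨by linarith [pi_pos], hc⟩ hsa
    · rw [← Real.sin_pi_sub a]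
      exact Real.strictMonoOn_sin.monotoneOn ⟨by linarith [pi_pos], hspi2⟩
        ⟨by linarith [pi_pos], by linarith⟩ hsπa
  have hcube := Real.sin_gt_sub_cube hs0
  have hs3 : 0 ≤ s * (1 - s) * (1 + s) :=
    mul_nonneg (mul_nonneg hs0.le (sub_nonneg.2 hs1)) (by linarith)
  nlinarith [hs3]

set_option maxHeartbeats 1000000 in
/-- Edge-wise estimate (9): for `λ` at distance at least `r` from the Dirichlet spectrum of
the edge, the endpoint derivatives of a solution of `-u'' = λu` are controlled by the
endpoint values, uniformly over edge lengths `l ∈ [l_min, 1/l_min]` and `|λ| ≤ Λ_max`. -/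
theorem derivative_boundary_estimate (lmin r Λmax : ℝ) (hlmin : 0 < lmin)
    (hlmin1 : lmin ≤ 1) (hr : 0 < r) (hΛ : 0 < Λmax) :
    ∃ M > (0 : ℝ), ∀ l : ℝ, lmin ≤ l → l ≤ 1 / lmin →
      ∀ lam : ℝ, |lam| ≤ Λmax →
        (∀ n : ℕ, 1 ≤ n → r ≤ |lam - (n * Real.pi / l) ^ 2|) →
        ∀ u : ℝ → ℝ, Differentiable ℝ u → Differentiable ℝ (deriv u) →
          (∀ x : ℝ, deriv (deriv u) x = -lam * u x) →
          (deriv u 0) ^ 2 + (deriv u l) ^ 2 ≤ M * ((u 0) ^ 2 + (u l) ^ 2) := by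
  have hsΛ : 0 < Real.sqrt Λmax := Real.sqrt_pos.2 hΛ
  set sΛ := Real.sqrt Λmax with hsΛdef
  set T := sΛ / lmin with hTdef
  have hT : 0 < T := by positivity
  set C₀ := Real.cosh T with hC₀def
  have hC₀ : 1 ≤ C₀ := Real.one_le_cosh T
  set δ₀ := r * lmin ^ 2 / (2 * T + π) with hδdef
  have hδ₀ : 0 < δ₀ := by positivity
  set m := min (min lmin (δ₀ / sΛ)) (1 / sΛ) with hmdef
  have hm : 0 < m := lt_min (lt_min hlmin (by positivity)) (by positivity)
  set K := max (C₀ / lmin) (4 / (3 * m)) with hKdef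
  have hK : 0 < K := lt_of_lt_of_le (by positivity) (le_max_left _ _)
  refine ⟨4 * K ^ 2 + 1, by positivity, ?_⟩
  intro l hl1 hl2 lam hlam hspec u hu hu' hu''
  have hlpos : 0 < l := lt_of_lt_of_le hlmin hl1
  suffices hkey : |deriv u 0| ≤ K * (|u 0| + |u l|) ∧ |deriv u l| ≤ K * (|u 0| + |u l|) by
    obtain ⟨h0, hl'⟩ := hkey
    have e0 : (deriv u 0) ^ 2 ≤ (K * (|u 0| + |u l|)) ^ 2 := by
      rw [← sq_abs (deriv u 0)]; exact pow_le_pow_left₀ (abs_nonneg _) h0 2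
    have el : (deriv u l) ^ 2 ≤ (K * (|u 0| + |u l|)) ^ 2 := by
      rw [← sq_abs (deriv u l)]; exact pow_le_pow_left₀ (abs_nonneg _) hl' 2
    nlinarith [sq_abs (u 0), sq_abs (u l), sq_nonneg (|u 0| - |u l|), sq_nonneg K,
      sq_nonneg (u 0), sq_nonneg (u l), mul_pos hK hK]
  have hlamle : lam ≤ Λmax := le_trans (le_abs_self _) hlam
  have hlamge : -Λmax ≤ lam := neg_le_of_abs_le hlam
  have hSnn : 0 ≤ |u 0| + |u l| := by positivity
  rcases lt_trichotomy lam 0 with hneg | hzero | hpos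
  · -- lam < 0
    set κ := Real.sqrt (-lam) with hκdef
    have hκ : 0 < κ := Real.sqrt_pos.2 (by linarith)
    have hκ2 : κ ^ 2 = -lam := Real.sq_sqrt (by linarith)
    have hκΛ : κ ≤ sΛ := Real.sqrt_le_sqrt (by linarith)
    have hlin : ∀ x : ℝ, HasDerivAt (fun t : ℝ => κ * t) κ x := by
      intro x; simpa using (hasDerivAt_id x).const_mul κ
    have hv1 : ∀ x : ℝ, HasDerivAt (fun t => Real.cosh (κ * t)) (Real.sinh (κ * x) * κ) x :=
      fun x => (hlin x).cosh
    have hw1 : ∀ x : ℝ, HasDerivAt (fun t => Real.sinh (κ * t) * κ)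
        (-lam * Real.cosh (κ * x)) x := by
      intro x
      have h := ((hlin x).sinh).mul_const κ
      refine h.congr_deriv ?_
      rw [← hκ2]; ring
    have hv2 : ∀ x : ℝ, HasDerivAt (fun t => Real.sinh (κ * t)) (Real.cosh (κ * x) * κ) x :=
      fun x => (hlin x).sinh
    have hw2 : ∀ x : ℝ, HasDerivAt (fun t => Real.cosh (κ * t) * κ)
        (-lam * Real.sinh (κ * x)) x := by
      intro x
      have h := ((hlin x).cosh).mul_const κ
      refine h.congr_deriv ?_
      rw [← hκ2]; ring
    have W1 := wronskian_eq lam u _ _ hu hu' hu'' hv1 hw1 l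
    have W2 := wronskian_eq lam u _ _ hu hu' hu'' hv2 hw2 l
    have W1' : u l * (Real.sinh (κ * l) * κ) - deriv u l * Real.cosh (κ * l)
        = -deriv u 0 := by simpa using W1
    have W2' : u l * (Real.cosh (κ * l) * κ) - deriv u l * Real.sinh (κ * l)
        = u 0 * κ := by simpa using W2
    have pyth := Real.cosh_sq_sub_sinh_sq (κ * l)
    have E1 : Real.sinh (κ * l) * deriv u 0 = κ * (u l - Real.cosh (κ * l) * u 0) := by
      linear_combination Real.sinh (κ * l) * W1' - Real.cosh (κ * l) * W2'
        + (κ * u l) * pyth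
    have E2 : Real.sinh (κ * l) * deriv u l = κ * (Real.cosh (κ * l) * u l - u 0) := by
      linear_combination -W2'
    have hθT : κ * l ≤ T := by
      calc κ * l ≤ sΛ * (1 / lmin) := mul_le_mul hκΛ hl2 hlpos.le hsΛ.le
      _ = T := by rw [hTdef]; ring
    have hsinh : κ * l ≤ Real.sinh (κ * l) := (Real.self_lt_sinh_iff.2 (mul_pos hκ hlpos)).le
    have hsinhabs : κ * l ≤ |Real.sinh (κ * l)| := le_trans hsinh (le_abs_self _)
    have hcosh : Real.cosh (κ * l) ≤ C₀ := by
      rw [hC₀def]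
      rw [Real.cosh_le_cosh]
      rw [abs_of_nonneg (mul_pos hκ hlpos).le, abs_of_nonneg hT.le]
      exact hθT
    have hcpos : (0:ℝ) < Real.cosh (κ * l) := Real.cosh_pos (κ * l)
    have hsub : ∀ A B : ℝ, |A - Real.cosh (κ * l) * B| ≤ C₀ * (|B| + |A|) := by
      intro A B
      have h2 := abs_sub A (Real.cosh (κ * l) * B)
      rw [abs_mul, abs_of_pos hcpos] at h2
      have h3 : Real.cosh (κ * l) * |B| ≤ C₀ * |B| :=
        mul_le_mul_of_nonneg_right hcosh (abs_nonneg B)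
      have h4 : |A| ≤ C₀ * |A| := le_mul_of_one_le_left (abs_nonneg A) hC₀
      calc |A - Real.cosh (κ * l) * B| ≤ |A| + Real.cosh (κ * l) * |B| := h2
      _ ≤ C₀ * |A| + C₀ * |B| := by linarith
      _ = C₀ * (|B| + |A|) := by ring
    have hB0 : |Real.sinh (κ * l) * deriv u 0| ≤ κ * C₀ * (|u 0| + |u l|) := by
      rw [E1, abs_mul, abs_of_pos hκ]
      have h5 := hsub (u l) (u 0)
      calc κ * |u l - Real.cosh (κ * l) * u 0| ≤ κ * (C₀ * (|u 0| + |u l|)) :=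
        mul_le_mul_of_nonneg_left h5 hκ.le
      _ = κ * C₀ * (|u 0| + |u l|) := by ring
    have hBl : |Real.sinh (κ * l) * deriv u l| ≤ κ * C₀ * (|u 0| + |u l|) := by
      rw [E2, abs_mul, abs_of_pos hκ]
      have h5 : |Real.cosh (κ * l) * u l - u 0| ≤ C₀ * (|u l| + |u 0|) := by
        rw [abs_sub_comm]
        exact hsub (u 0) (u l)
      calc κ * |Real.cosh (κ * l) * u l - u 0| ≤ κ * (C₀ * (|u l| + |u 0|)) :=
        mul_le_mul_of_nonneg_left h5 hκ.le
      _ = κ * C₀ * (|u 0| + |u l|) := by ring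
    have heq : κ * C₀ * (|u 0| + |u l|) / (κ * l) = C₀ / l * (|u 0| + |u l|) := by
      field_simp
    have hfin : C₀ / l * (|u 0| + |u l|) ≤ K * (|u 0| + |u l|) := by
      apply mul_le_mul_of_nonneg_right _ hSnn
      calc C₀ / l ≤ C₀ / lmin := by gcongr
      _ ≤ K := le_max_left _ _
    constructor
    · have := div_bound (mul_pos hκ hlpos) hsinhabs hB0
      rw [heq] at this
      exact le_trans this hfin
    · have := div_bound (mul_pos hκ hlpos) hsinhabs hBl
      rw [heq] at this
      exact le_trans this hfin
  · -- lam = 0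
    subst hzero
    have hv1 : ∀ x : ℝ, HasDerivAt (fun _ : ℝ => (1:ℝ)) ((fun _ : ℝ => (0:ℝ)) x) x :=
      fun x => hasDerivAt_const x 1
    have hw1 : ∀ x : ℝ, HasDerivAt (fun _ : ℝ => (0:ℝ)) (-(0:ℝ) * (fun _ : ℝ => (1:ℝ)) x) x := by
      intro x; simpa using hasDerivAt_const x (0:ℝ)
    have hv2 : ∀ x : ℝ, HasDerivAt (fun t : ℝ => t) ((fun _ : ℝ => (1:ℝ)) x) x :=
      fun x => hasDerivAt_id x
    have hw2 : ∀ x : ℝ, HasDerivAt (fun _ : ℝ => (1:ℝ)) (-(0:ℝ) * x) x := by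
      intro x; simpa using hasDerivAt_const x (1:ℝ)
    have W1 := wronskian_eq 0 u _ _ hu hu' hu'' hv1 hw1 l
    have W2 := wronskian_eq 0 u _ _ hu hu' hu'' hv2 hw2 l
    have W1' : deriv u l = deriv u 0 := by simpa using W1
    have W2' : u l - deriv u l * l = u 0 := by simpa using W2
    have hder : deriv u 0 = deriv u l := W1'.symm
    have hEl : l * deriv u l = u l - u 0 := by linear_combination -W2'
    have hBl : |l * deriv u l| ≤ |u 0| + |u l| := by
      rw [hEl]
      calc |u l - u 0| ≤ |u l| + |u 0| := abs_sub _ _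
      _ = |u 0| + |u l| := by ring
    have hlabs : lmin ≤ |l| := le_trans hl1 (le_abs_self _)
    have hdb := div_bound hlmin hlabs hBl
    have hfin : (|u 0| + |u l|) / lmin ≤ K * (|u 0| + |u l|) := by
      rw [div_eq_mul_one_div, mul_comm]
      apply mul_le_mul_of_nonneg_right _ hSnn
      calc 1 / lmin ≤ C₀ / lmin := by gcongr
      _ ≤ K := le_max_left _ _
    constructor
    · rw [hder]; exact le_trans hdb hfin
    · exact le_trans hdb hfin
  · -- lam > 0
    set k := Real.sqrt lam with hkdef
    have hk : 0 < k := Real.sqrt_pos.2 hpos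
    have hk2 : k ^ 2 = lam := Real.sq_sqrt hpos.le
    have hkΛ : k ≤ sΛ := Real.sqrt_le_sqrt hlamle
    have hlin : ∀ x : ℝ, HasDerivAt (fun t : ℝ => k * t) k x := by
      intro x; simpa using (hasDerivAt_id x).const_mul k
    have hv1 : ∀ x : ℝ, HasDerivAt (fun t => Real.cos (k * t)) (-Real.sin (k * x) * k) x :=
      fun x => (hlin x).cos
    have hw1 : ∀ x : ℝ, HasDerivAt (fun t => -Real.sin (k * t) * k)
        (-lam * Real.cos (k * x)) x := by
      intro x
      have h := (((hlin x).sin).neg).mul_const k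
      refine h.congr_deriv ?_
      rw [← hk2]; ring
    have hv2 : ∀ x : ℝ, HasDerivAt (fun t => Real.sin (k * t)) (Real.cos (k * x) * k) x :=
      fun x => (hlin x).sin
    have hw2 : ∀ x : ℝ, HasDerivAt (fun t => Real.cos (k * t) * k)
        (-lam * Real.sin (k * x)) x := by
      intro x
      have h := ((hlin x).cos).mul_const k
      refine h.congr_deriv ?_
      rw [← hk2]; ring
    have W1 := wronskian_eq lam u _ _ hu hu' hu'' hv1 hw1 l
    have W2 := wronskian_eq lam u _ _ hu hu' hu'' hv2 hw2 l
    have W1' : u l * (-Real.sin (k * l) * k) - deriv u l * Real.cos (k * l)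
        = -deriv u 0 := by simpa using W1
    have W2' : u l * (Real.cos (k * l) * k) - deriv u l * Real.sin (k * l)
        = u 0 * k := by simpa using W2
    have pyth := Real.sin_sq_add_cos_sq (k * l)
    have E1 : Real.sin (k * l) * deriv u 0 = k * (u l - Real.cos (k * l) * u 0) := by
      linear_combination Real.sin (k * l) * W1' - Real.cos (k * l) * W2'
        + (k * u l) * pyth
    have E2 : Real.sin (k * l) * deriv u l = k * (Real.cos (k * l) * u l - u 0) := by
      linear_combination -W2'
    have hθpos : 0 < k * l := mul_pos hk hlpos
    have hθT : k * l ≤ T := by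
      calc k * l ≤ sΛ * (1 / lmin) := mul_le_mul hkΛ hl2 hlpos.le hsΛ.le
      _ = T := by rw [hTdef]; ring
    have hsp2 : ∀ n : ℕ, 1 ≤ n → r * lmin ^ 2 ≤ |(k * l) ^ 2 - (n * π) ^ 2| := by
      intro n hn
      have h := hspec n hn
      have heq : (k * l) ^ 2 - ((n:ℝ) * π) ^ 2 = l ^ 2 * (lam - ((n:ℝ) * π / l) ^ 2) := by
        rw [← hk2]; field_simp
      rw [heq, abs_mul, abs_of_nonneg (sq_nonneg l)]
      have hll : lmin ^ 2 ≤ l ^ 2 := by nlinarith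
      have := mul_le_mul hll h hr.le (sq_nonneg l)
      linarith
    have hsin := sin_lb (r * lmin ^ 2) T (k * l) (by positivity) hθpos hθT hsp2
    rw [← hδdef] at hsin
    have hkm : k * m ≤ min (min (k * l) δ₀) 1 := by
      refine le_min (le_min ?_ ?_) ?_
      · have h1 : m ≤ lmin := le_trans (min_le_left _ _) (min_le_left _ _)
        exact mul_le_mul_of_nonneg_left (h1.trans hl1) hk.le
      · have h1 : m ≤ δ₀ / sΛ := le_trans (min_le_left _ _) (min_le_right _ _)
        calc k * m ≤ sΛ * (δ₀ / sΛ) := mul_le_mul hkΛ h1 hm.le hsΛ.le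
        _ = δ₀ := by field_simp
      · have h1 : m ≤ 1 / sΛ := min_le_right _ _
        calc k * m ≤ sΛ * (1 / sΛ) := mul_le_mul hkΛ h1 hm.le hsΛ.le
        _ = 1 := by field_simp
    have hsin2 : 3 / 4 * (k * m) ≤ |Real.sin (k * l)| :=
      le_trans (mul_le_mul_of_nonneg_left hkm (by norm_num)) hsin
    have hB0 : |Real.sin (k * l) * deriv u 0| ≤ k * (|u 0| + |u l|) := by
      rw [E1, abs_mul, abs_of_pos hk]
      have h2 := abs_sub (u l) (Real.cos (k * l) * u 0)
      rw [abs_mul] at h2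
      have h3 : |u l - Real.cos (k * l) * u 0| ≤ |u 0| + |u l| := by
        have h4 : |Real.cos (k * l)| * |u 0| ≤ 1 * |u 0| :=
          mul_le_mul_of_nonneg_right (Real.abs_cos_le_one (k * l)) (abs_nonneg (u 0))
        linarith
      exact mul_le_mul_of_nonneg_left h3 hk.le
    have hBl : |Real.sin (k * l) * deriv u l| ≤ k * (|u 0| + |u l|) := by
      rw [E2, abs_mul, abs_of_pos hk]
      have h2 := abs_sub (Real.cos (k * l) * u l) (u 0)
      rw [abs_mul] at h2
      have h3 : |Real.cos (k * l) * u l - u 0| ≤ |u 0| + |u l| := by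
        have h4 : |Real.cos (k * l)| * |u l| ≤ 1 * |u l| :=
          mul_le_mul_of_nonneg_right (Real.abs_cos_le_one (k * l)) (abs_nonneg (u l))
        linarith
      exact mul_le_mul_of_nonneg_left h3 hk.le
    have hs₀ : 0 < 3 / 4 * (k * m) := by positivity
    have heq2 : k * (|u 0| + |u l|) / (3 / 4 * (k * m)) = 4 / (3 * m) * (|u 0| + |u l|) := by
      field_simp
    have hfin : 4 / (3 * m) * (|u 0| + |u l|) ≤ K * (|u 0| + |u l|) :=
      mul_le_mul_of_nonneg_right (le_max_right _ _) hSnn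
    constructor
    · have := div_bound hs₀ hsin2 hB0
      rw [heq2] at this
      exact le_trans this hfin
    · have := div_bound hs₀ hsin2 hBl
      rw [heq2] at this
      exact le_trans this hfin
end

section
/- For all real numbers l_min with 0 < l_min ≤ 1, r > 0, and Λ_max > 0 there exists M > 0 such that the following holds: for every edge length l with l_min ≤ l ≤ 1/l_min, every real λ with |λ| ≤ Λ_max and |λ - (n·π/l)²| ≥ r for all natural numbers n ≥ 1, every twice differentiable u : ℝ → ℝ with u''(x) = -λ · u(x) for all x ∈ ℝ, and every x ∈ [0, l], one has u(x)² ≤ M · (u(0)² + u(l)²). -/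
open Real

/-- A solution of the ODE `-u'' = λ u` on the whole line. -/
def IsSol (lam : ℝ) (u : ℝ → ℝ) : Prop :=
  Differentiable ℝ u ∧ Differentiable ℝ (deriv u) ∧ ∀ x, deriv (deriv u) x = -lam * u x

/-- Gronwall-type estimate. -/
lemma gron_aux (K : ℝ) (g : ℝ → ℝ) (hg : Differentiable ℝ g)
    (h : ∀ y, deriv g y ≤ K * g y) {x : ℝ} (hx : 0 ≤ x) :
    g x ≤ g 0 * Real.exp (K * x) := by
  set φ : ℝ → ℝ := fun y => g y * Real.exp (-(K * y)) with hφ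
  have hlin : ∀ y : ℝ, HasDerivAt (fun y : ℝ => -(K * y)) (-K) y := by
    intro y
    simpa using ((hasDerivAt_id y).const_mul K).fun_neg
  have hφd : Differentiable ℝ φ := by
    refine hg.mul ?_
    exact fun y => ((hlin y).exp).differentiableAt
  have hφ' : ∀ y, deriv φ y ≤ 0 := by
    intro y
    have h2 : HasDerivAt φ (deriv g y * Real.exp (-(K * y)) +
        g y * (Real.exp (-(K * y)) * (-K))) y :=
      (hg y).hasDerivAt.mul ((hlin y).exp)
    rw [h2.deriv]
    have hE : 0 < Real.exp (-(K * y)) := Real.exp_pos _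
    nlinarith [h y]
  have hanti : Antitone φ := antitone_of_deriv_nonpos hφd hφ'
  have h1 : φ x ≤ φ 0 := hanti hx
  have h0 : φ 0 = g 0 := by simp [hφ]
  rw [h0] at h1
  have hE : 0 < Real.exp (K * x) := Real.exp_pos _
  have h2 : g x * Real.exp (-(K * x)) * Real.exp (K * x) ≤ g 0 * Real.exp (K * x) :=
    mul_le_mul_of_nonneg_right h1 hE.le
  calc g x = g x * Real.exp (-(K * x)) * Real.exp (K * x) := by
        rw [mul_assoc, ← Real.exp_add]; simp
    _ ≤ g 0 * Real.exp (K * x) := h2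

/-- Energy estimate for solutions of `-u'' = λ u`. -/
lemma sol_energy (lam : ℝ) (u : ℝ → ℝ) (hu : IsSol lam u) {x : ℝ} (hx : 0 ≤ x) :
    u x ^ 2 ≤ (u 0 ^ 2 + deriv u 0 ^ 2) * Real.exp ((1 + |lam|) * x) := by
  obtain ⟨h1, h2, h3⟩ := hu
  set g : ℝ → ℝ := fun y => u y ^ 2 + deriv u y ^ 2 with hg
  have hgd : Differentiable ℝ g := (h1.pow 2).add (h2.pow 2)
  have hder : ∀ y, deriv g y =
      2 * u y * deriv u y + 2 * deriv u y * deriv (deriv u) y := by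
    intro y
    have hu' : HasDerivAt u (deriv u y) y := (h1 y).hasDerivAt
    have hu'' : HasDerivAt (deriv u) (deriv (deriv u) y) y := (h2 y).hasDerivAt
    have hD := ((hu'.fun_pow 2).fun_add (hu''.fun_pow 2)).deriv
    rw [show g = fun y => u y ^ 2 + deriv u y ^ 2 from rfl, hD]
    push_cast
    ring
  have key : ∀ y, deriv g y ≤ (1 + |lam|) * g y := by
    intro y
    rw [hder y, h3 y]
    have hA : 0 ≤ |lam| + lam := by linarith [neg_abs_le lam]
    have hB : 0 ≤ 2 + |lam| - lam := by linarith [le_abs_self lam]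
    have hg1 : g y = u y ^ 2 + deriv u y ^ 2 := rfl
    rw [hg1]
    nlinarith [mul_nonneg hA (sq_nonneg (u y + deriv u y)),
      mul_nonneg hB (sq_nonneg (u y - deriv u y))]
  have hgr := gron_aux (1 + |lam|) g hgd key hx
  have h0 : g 0 = u 0 ^ 2 + deriv u 0 ^ 2 := rfl
  have hx2 : u x ^ 2 ≤ g x := by
    have : g x = u x ^ 2 + deriv u x ^ 2 := rfl
    nlinarith [sq_nonneg (deriv u x)]
  rw [h0] at hgr
  linarith

/-- Uniqueness for the initial value problem. -/
lemma sol_unique (lam : ℝ) (u v : ℝ → ℝ) (hu : IsSol lam u) (hv : IsSol lam v)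
    (h0 : u 0 = v 0) (h0' : deriv u 0 = deriv v 0) {x : ℝ} (hx : 0 ≤ x) : u x = v x := by
  have hD : deriv (fun y => u y - v y) = fun y => deriv u y - deriv v y :=
    funext fun y => deriv_sub (hu.1 y) (hv.1 y)
  have hw : IsSol lam (fun y => u y - v y) := by
    obtain ⟨hu1, hu2, hu3⟩ := hu
    obtain ⟨hv1, hv2, hv3⟩ := hv
    refine ⟨hu1.sub hv1, ?_, ?_⟩
    · rw [hD]; exact hu2.sub hv2
    · intro y
      rw [hD, deriv_fun_sub (hu2 y) (hv2 y), hu3 y, hv3 y]; ring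
  have hE := sol_energy lam _ hw hx
  have hz : (fun y => u y - v y) 0 = 0 := by simp [h0]
  have hz' : deriv (fun y => u y - v y) 0 = 0 := by rw [hD]; simp [h0']
  have hE2 : (u x - v x) ^ 2 ≤ 0 := by
    calc (u x - v x) ^ 2
        ≤ ((u 0 - v 0) ^ 2 + deriv (fun y => u y - v y) 0 ^ 2) *
          Real.exp ((1 + |lam|) * x) := hE
      _ = 0 := by rw [hz', h0]; simp
  have h2 : (u x - v x) ^ 2 = 0 := le_antisymm hE2 (sq_nonneg _)
  have := (pow_eq_zero_iff (two_ne_zero)).mp h2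
  linarith

/-- Representation of a solution in terms of the basis `C`, `S`. -/
lemma sol_repr (lam : ℝ) (C S u : ℝ → ℝ) (hC : IsSol lam C) (hS : IsSol lam S)
    (hC0 : C 0 = 1) (hC0' : deriv C 0 = 0) (hS0 : S 0 = 0) (hS0' : deriv S 0 = 1)
    (hu : IsSol lam u) {l : ℝ} (hl : 0 ≤ l) :
    u l = u 0 * C l + deriv u 0 * S l := by
  set a := u 0 with ha
  set c := deriv u 0 with hc
  set v : ℝ → ℝ := fun y => a * C y + c * S y with hv
  have hDv : deriv v = fun y => a * deriv C y + c * deriv S y := by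
    funext y
    rw [show v = fun y => a * C y + c * S y from rfl,
      deriv_fun_add ((hC.1 y).const_mul _) ((hS.1 y).const_mul _),
      deriv_const_mul _ (hC.1 y), deriv_const_mul _ (hS.1 y)]
  have hvSol : IsSol lam v := by
    refine ⟨(hC.1.const_mul _).add (hS.1.const_mul _), ?_, ?_⟩
    · rw [hDv]; exact (hC.2.1.const_mul _).add (hS.2.1.const_mul _)
    · intro y
      rw [hDv, deriv_fun_add ((hC.2.1 y).const_mul _) ((hS.2.1 y).const_mul _),
        deriv_const_mul _ (hC.2.1 y), deriv_const_mul _ (hS.2.1 y),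
        hC.2.2 y, hS.2.2 y]
      simp only [hv]
      ring
  have hv0 : v 0 = a := by simp [hv, hC0, hS0]
  have hv0' : deriv v 0 = c := by rw [hDv]; simp [hC0', hS0']
  have := sol_unique lam u v hu hvSol (by rw [hv0]) (by rw [hv0']) hl
  rw [this]

/-- Main assembly step: boundedness from boundary data given a good basis of solutions. -/
lemma key_step (lam l B δ M0 : ℝ) (hl : 0 < l) (hB : 1 ≤ B) (hδ : 0 < δ)
    (C S : ℝ → ℝ) (hC : IsSol lam C) (hS : IsSol lam S)
    (hC0 : C 0 = 1) (hC0' : deriv C 0 = 0) (hS0 : S 0 = 0) (hS0' : deriv S 0 = 1)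
    (hCl : |C l| ≤ B) (hSl : δ ≤ |S l|)
    (hM0 : ∀ y : ℝ, 0 ≤ y → y ≤ l → Real.exp ((1 + |lam|) * y) ≤ M0)
    (u : ℝ → ℝ) (hu : IsSol lam u) (x : ℝ) (hx : x ∈ Set.Icc (0 : ℝ) l) :
    u x ^ 2 ≤ (M0 * (1 + 2 * B ^ 2 / δ ^ 2)) * (u 0 ^ 2 + u l ^ 2) := by
  obtain ⟨hx0, hxl⟩ := hx
  have hul : u l = u 0 * C l + deriv u 0 * S l :=
    sol_repr lam C S u hC hS hC0 hC0' hS0 hS0' hu hl.le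
  set a := u 0 with ha
  set c := deriv u 0 with hc
  set b := u l with hb
  -- energy bound
  have hE : u x ^ 2 ≤ (a ^ 2 + c ^ 2) * M0 := by
    have h1 := sol_energy lam u hu hx0
    have h2 : Real.exp ((1 + |lam|) * x) ≤ M0 := hM0 x hx0 hxl
    have h3 : (0 : ℝ) ≤ a ^ 2 + c ^ 2 := by positivity
    calc u x ^ 2 ≤ (a ^ 2 + c ^ 2) * Real.exp ((1 + |lam|) * x) := h1
      _ ≤ (a ^ 2 + c ^ 2) * M0 := mul_le_mul_of_nonneg_left h2 h3
  have hM0pos : 0 < M0 :=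
    lt_of_lt_of_le (Real.exp_pos _) (hM0 0 le_rfl hl.le)
  -- control c via the boundary values
  have e1 : c * S l = b - a * C l := by linarith [hul]
  have e2 : c ^ 2 * S l ^ 2 = (b - a * C l) ^ 2 := by rw [← mul_pow, e1]
  have e3 : δ ^ 2 ≤ S l ^ 2 := by
    rw [← sq_abs (S l)]
    exact pow_le_pow_left₀ hδ.le hSl 2
  have e4 : C l ^ 2 ≤ B ^ 2 := by
    rw [← sq_abs (C l)]
    exact pow_le_pow_left₀ (abs_nonneg _) hCl 2
  have hc2 : c ^ 2 * δ ^ 2 ≤ 2 * b ^ 2 + 2 * B ^ 2 * a ^ 2 := by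
    have e5 : c ^ 2 * δ ^ 2 ≤ c ^ 2 * S l ^ 2 :=
      mul_le_mul_of_nonneg_left e3 (sq_nonneg _)
    have e6 : (b - a * C l) ^ 2 ≤ 2 * b ^ 2 + 2 * (a ^ 2 * C l ^ 2) := by
      nlinarith [sq_nonneg (b + a * C l)]
    have e7 : a ^ 2 * C l ^ 2 ≤ a ^ 2 * B ^ 2 :=
      mul_le_mul_of_nonneg_left e4 (sq_nonneg _)
    calc c ^ 2 * δ ^ 2 ≤ c ^ 2 * S l ^ 2 := e5
      _ = (b - a * C l) ^ 2 := e2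
      _ ≤ 2 * b ^ 2 + 2 * (a ^ 2 * C l ^ 2) := e6
      _ ≤ 2 * b ^ 2 + 2 * (a ^ 2 * B ^ 2) := by linarith
      _ = 2 * b ^ 2 + 2 * B ^ 2 * a ^ 2 := by ring
  -- assemble
  have hδ2 : (0 : ℝ) < δ ^ 2 := by positivity
  have main2 : u x ^ 2 * δ ^ 2 ≤
      ((M0 * (1 + 2 * B ^ 2 / δ ^ 2)) * (a ^ 2 + b ^ 2)) * δ ^ 2 := by
    have expand : ((M0 * (1 + 2 * B ^ 2 / δ ^ 2)) * (a ^ 2 + b ^ 2)) * δ ^ 2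
        = M0 * (δ ^ 2 + 2 * B ^ 2) * (a ^ 2 + b ^ 2) := by
      field_simp
    rw [expand]
    have h1 : u x ^ 2 * δ ^ 2 ≤ (a ^ 2 + c ^ 2) * M0 * δ ^ 2 :=
      mul_le_mul_of_nonneg_right hE hδ2.le
    have h2 : M0 * (c ^ 2 * δ ^ 2) ≤ M0 * (2 * b ^ 2 + 2 * B ^ 2 * a ^ 2) :=
      mul_le_mul_of_nonneg_left hc2 hM0pos.le
    have hB2 : (0 : ℝ) ≤ δ ^ 2 + 2 * B ^ 2 - 2 := by
      have hp : (0:ℝ) ≤ (B - 1) * (B + 1) :=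
        mul_nonneg (by linarith) (by linarith)
      have hq : (B - 1) * (B + 1) = B ^ 2 - 1 := by ring
      have := sq_nonneg δ
      linarith [hp, hq ▸ hp]
    have h3 : (0 : ℝ) ≤ M0 * (b ^ 2 * (δ ^ 2 + 2 * B ^ 2 - 2)) :=
      mul_nonneg hM0pos.le (mul_nonneg (sq_nonneg _) hB2)
    calc u x ^ 2 * δ ^ 2 ≤ (a ^ 2 + c ^ 2) * M0 * δ ^ 2 := h1
      _ = M0 * (a ^ 2 * δ ^ 2) + M0 * (c ^ 2 * δ ^ 2) := by ring
      _ ≤ M0 * (a ^ 2 * δ ^ 2) + M0 * (2 * b ^ 2 + 2 * B ^ 2 * a ^ 2) := by linarith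
      _ = M0 * (δ ^ 2 + 2 * B ^ 2) * (a ^ 2 + b ^ 2)
          - M0 * (b ^ 2 * (δ ^ 2 + 2 * B ^ 2 - 2)) := by ring
      _ ≤ M0 * (δ ^ 2 + 2 * B ^ 2) * (a ^ 2 + b ^ 2) := by linarith
  exact le_of_mul_le_mul_right main2 hδ2

lemma hasDerivAt_cos_mul (s x : ℝ) :
    HasDerivAt (fun y => Real.cos (s * y)) (-(s * Real.sin (s * x))) x := by
  have h1 : HasDerivAt (fun y : ℝ => s * y) s x := by
    simpa using (hasDerivAt_id x).const_mul s
  simpa [mul_comm, Function.comp_def] using (Real.hasDerivAt_cos (s * x)).comp x h1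

lemma hasDerivAt_sin_mul (s x : ℝ) :
    HasDerivAt (fun y => Real.sin (s * y)) (s * Real.cos (s * x)) x := by
  have h1 : HasDerivAt (fun y : ℝ => s * y) s x := by
    simpa using (hasDerivAt_id x).const_mul s
  simpa [mul_comm, Function.comp_def] using (Real.hasDerivAt_sin (s * x)).comp x h1

lemma hasDerivAt_cosh_mul (s x : ℝ) :
    HasDerivAt (fun y => Real.cosh (s * y)) (s * Real.sinh (s * x)) x := by
  have h1 : HasDerivAt (fun y : ℝ => s * y) s x := by
    simpa using (hasDerivAt_id x).const_mul s
  simpa [mul_comm, Function.comp_def] using (Real.hasDerivAt_cosh (s * x)).comp x h1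

lemma hasDerivAt_sinh_mul (s x : ℝ) :
    HasDerivAt (fun y => Real.sinh (s * y)) (s * Real.cosh (s * x)) x := by
  have h1 : HasDerivAt (fun y : ℝ => s * y) s x := by
    simpa using (hasDerivAt_id x).const_mul s
  simpa [mul_comm, Function.comp_def] using (Real.hasDerivAt_sinh (s * x)).comp x h1

/-- Jordan-type lower bound: `|sin d| ≥ (2/π)|d|` for `|d| ≤ π/2`. -/
lemma abs_sin_ge (d : ℝ) (hd : |d| ≤ π / 2) : 2 / π * |d| ≤ |Real.sin d| := by
  rcases le_or_gt 0 d with h | h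
  · rw [abs_of_nonneg h]
    have h1 := Real.mul_le_sin h (by rwa [abs_of_nonneg h] at hd)
    calc 2 / π * d ≤ Real.sin d := h1
      _ ≤ |Real.sin d| := le_abs_self _
  · rw [abs_of_neg h]
    have hnd : (0 : ℝ) ≤ -d := by linarith
    have h1 := Real.mul_le_sin hnd (by rwa [abs_of_neg h] at hd)
    calc 2 / π * (-d) ≤ Real.sin (-d) := h1
      _ ≤ |Real.sin (-d)| := le_abs_self _
      _ = |Real.sin d| := by rw [Real.sin_neg, abs_neg]

/-- Lower bound for `sin(√λ l)/√λ` under the spectral gap condition, `λ > 0`. -/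
lemma sin_lower_bound (lmin r Λmax l lam : ℝ) (hlmin : 0 < lmin)
    (hl1 : lmin ≤ l) (hl2 : l ≤ 1 / lmin) (hlam : 0 < lam) (hlamΛ : |lam| ≤ Λmax)
    (hr : 0 < r) (hΛ : 0 < Λmax)
    (hgap : ∀ n : ℕ, 1 ≤ n → r ≤ |lam - (n * π / l) ^ 2|) :
    min (2 / π * lmin)
      (2 / π * (lmin * r / (2 * Real.sqrt Λmax + π / (2 * lmin))) / Real.sqrt Λmax)
      ≤ |(Real.sqrt lam)⁻¹ * Real.sin (Real.sqrt lam * l)| := by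
  have hπ : (0 : ℝ) < π := Real.pi_pos
  set s := Real.sqrt lam with hs
  have hspos : 0 < s := Real.sqrt_pos.mpr hlam
  have hlpos : 0 < l := lt_of_lt_of_le hlmin hl1
  set t := s * l with ht
  have htpos : 0 < t := mul_pos hspos hlpos
  set n : ℤ := round (t / π) with hn
  have hn0 : 0 ≤ n := by
    rw [hn, round_eq]
    exact Int.floor_nonneg.mpr (by positivity)
  have habs : |t - n * π| ≤ π / 2 := by
    have h1 := abs_sub_round (t / π)
    have h2 : t - n * π = (t / π - n) * π := by field_simp
    rw [h2, abs_mul, abs_of_pos hπ]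
    calc |t / π - ↑n| * π ≤ (1 / 2) * π := by
          exact mul_le_mul_of_nonneg_right h1 hπ.le
      _ = π / 2 := by ring
  have hsin : 2 / π * |t - n * π| ≤ |Real.sin t| := by
    have h1 := abs_sin_ge (t - n * π) habs
    have h2 : Real.sin ((t - n * π) + n * π) = (-1) ^ n * Real.sin (t - n * π) :=
      Real.sin_add_int_mul_pi _ n
    have h3 : |Real.sin t| = |Real.sin (t - n * π)| := by
      have h4 : Real.sin t = (-1) ^ n * Real.sin (t - n * π) := by
        rw [← h2]; ring_nf
      rw [h4, abs_mul, ← Int.toNat_of_nonneg hn0, zpow_natCast, abs_pow,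
        abs_neg, abs_one, one_pow, one_mul]
    rw [h3]
    exact h1
  have hsle : s ≤ Real.sqrt Λmax := by
    apply Real.sqrt_le_sqrt
    calc lam ≤ |lam| := le_abs_self _
      _ ≤ Λmax := hlamΛ
  have hsΛpos : 0 < Real.sqrt Λmax := Real.sqrt_pos.mpr hΛ
  have habseq : |(s)⁻¹ * Real.sin t| = |Real.sin t| / s := by
    rw [abs_mul, abs_inv, abs_of_pos hspos, inv_mul_eq_div]
  rw [habseq]
  rcases eq_or_lt_of_le hn0 with hn1 | hn1
  · -- n = 0 : t ≤ π/2
    have hteq : |t - n * π| = t := by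
      rw [← hn1]; push_cast; rw [mul_comm]
      simp [abs_of_pos htpos]
    have h1 : 2 / π * t ≤ |Real.sin t| := by rw [hteq] at hsin; exact hsin
    have h2 : 2 / π * lmin ≤ |Real.sin t| / s := by
      rw [le_div_iff₀ hspos]
      calc 2 / π * lmin * s ≤ 2 / π * (l * s) := by
            have hls : lmin * s ≤ l * s := mul_le_mul_of_nonneg_right hl1 hspos.le
            have h2π : (0 : ℝ) < 2 / π := by positivity
            nlinarith
        _ = 2 / π * t := by rw [ht]; ring
        _ ≤ |Real.sin t| := h1
    exact le_trans (min_le_left _ _) h2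
  · -- n ≥ 1
    set m : ℕ := n.toNat with hm
    have hm1 : 1 ≤ m := by omega
    have hmn : (m : ℝ) = (n : ℝ) := by
      exact_mod_cast congrArg Int.cast (Int.toNat_of_nonneg hn0)
    have hgapm := hgap m hm1
    set A : ℝ := 2 * Real.sqrt Λmax + π / (2 * lmin) with hA
    have hApos : 0 < A := by positivity
    -- bound s + mπ/l ≤ A
    have hnπ : (n : ℝ) * π ≤ t + π / 2 := by
      have := abs_le.mp habs
      linarith [this.2]
    have hbound : s + (m : ℝ) * π / l ≤ A := by
      have h1 : (m : ℝ) * π / l ≤ s + π / (2 * l) := by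
        rw [hmn, div_le_iff₀ hlpos]
        have : t = s * l := rfl
        calc (n : ℝ) * π ≤ t + π / 2 := hnπ
          _ = s * l + π / 2 := by rw [ht]
          _ = (s + π / (2 * l)) * l := by field_simp
      have h2 : π / (2 * l) ≤ π / (2 * lmin) := by
        apply div_le_div_of_nonneg_left hπ.le (by positivity)
        linarith
      linarith
    -- gap gives |s - mπ/l| ≥ r / A
    have hfac : |lam - ((m : ℝ) * π / l) ^ 2| = |s - (m : ℝ) * π / l| * (s + (m : ℝ) * π / l) := by
      have hlam_s : lam = s ^ 2 := (Real.sq_sqrt hlam.le).symm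
      have hpos : 0 ≤ s + (m : ℝ) * π / l := by positivity
      rw [hlam_s, show s ^ 2 - ((m : ℝ) * π / l) ^ 2
          = (s - (m : ℝ) * π / l) * (s + (m : ℝ) * π / l) by ring,
        abs_mul, abs_of_nonneg hpos]
    have hgap2 : r ≤ |s - (m : ℝ) * π / l| * A := by
      calc r ≤ |s - (m : ℝ) * π / l| * (s + (m : ℝ) * π / l) := by
            rw [← hfac]; exact hgapm
        _ ≤ |s - (m : ℝ) * π / l| * A :=
            mul_le_mul_of_nonneg_left hbound (abs_nonneg _)
    have hsd : r / A ≤ |s - (m : ℝ) * π / l| := by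
      rw [div_le_iff₀ hApos]; linarith
    -- |t - mπ| ≥ l * r / A ≥ lmin * r / A
    have htm : lmin * r / A ≤ |t - (m : ℝ) * π| := by
      have h1 : t - (m : ℝ) * π = (s - (m : ℝ) * π / l) * l := by
        rw [ht]; field_simp
      rw [h1, abs_mul, abs_of_pos hlpos]
      calc lmin * r / A = (r / A) * lmin := by ring
        _ ≤ |s - (m : ℝ) * π / l| * lmin :=
            mul_le_mul_of_nonneg_right hsd hlmin.le
        _ ≤ |s - (m : ℝ) * π / l| * l :=
            mul_le_mul_of_nonneg_left hl1 (abs_nonneg _)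
    have hsin2 : 2 / π * (lmin * r / A) ≤ |Real.sin t| := by
      have h1 : |t - (m : ℝ) * π| ≤ π / 2 := by rw [hmn]; exact habs
      have h2 : 2 / π * |t - (m : ℝ) * π| ≤ |Real.sin t| := by rw [hmn]; exact hsin
      have h3 : 2 / π * (lmin * r / A) ≤ 2 / π * |t - (m : ℝ) * π| := by
        apply mul_le_mul_of_nonneg_left htm (by positivity)
      linarith
    have hfinal : 2 / π * (lmin * r / A) / Real.sqrt Λmax ≤ |Real.sin t| / s :=
      div_le_div₀ (abs_nonneg _) hsin2 hspos hsle
    exact le_trans (min_le_right _ _) hfinal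

/-- Edge-wise pointwise estimate (8): for `λ` at distance at least `r` from the Dirichlet
spectrum of the edge, a solution of `-u'' = λu` is controlled on the whole edge by its two
boundary values, uniformly over edge lengths `l ∈ [l_min, 1/l_min]` and `|λ| ≤ Λ_max`. -/
theorem pointwise_boundary_estimate (lmin r Λmax : ℝ) (hlmin : 0 < lmin)
    (hlmin1 : lmin ≤ 1) (hr : 0 < r) (hΛ : 0 < Λmax) :
    ∃ M > (0 : ℝ), ∀ l : ℝ, lmin ≤ l → l ≤ 1 / lmin →
      ∀ lam : ℝ, |lam| ≤ Λmax →
        (∀ n : ℕ, 1 ≤ n → r ≤ |lam - (n * Real.pi / l) ^ 2|) →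
        ∀ u : ℝ → ℝ, Differentiable ℝ u → Differentiable ℝ (deriv u) →
          (∀ x : ℝ, deriv (deriv u) x = -lam * u x) →
          ∀ x ∈ Set.Icc (0 : ℝ) l, (u x) ^ 2 ≤ M * ((u 0) ^ 2 + (u l) ^ 2) := by
  have hπ : (0 : ℝ) < π := Real.pi_pos
  have hsΛ : 0 < Real.sqrt Λmax := Real.sqrt_pos.mpr hΛ
  set A : ℝ := 2 * Real.sqrt Λmax + π / (2 * lmin) with hA
  have hApos : 0 < A := by positivity
  set B : ℝ := Real.cosh (Real.sqrt Λmax / lmin) with hB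
  have hB1 : 1 ≤ B := Real.one_le_cosh _
  set δ : ℝ := min lmin (min (2 / π * lmin)
      (2 / π * (lmin * r / A) / Real.sqrt Λmax)) with hδ
  have hδpos : 0 < δ := by
    apply lt_min hlmin
    apply lt_min
    · positivity
    · positivity
  set M0 : ℝ := Real.exp ((1 + Λmax) / lmin) with hM0
  have hM0pos : 0 < M0 := Real.exp_pos _
  refine ⟨M0 * (1 + 2 * B ^ 2 / δ ^ 2), by positivity, ?_⟩
  intro l hl1 hl2 lam hlamΛ hgap u hu1 hu2 hu3 x hx
  have hlpos : 0 < l := lt_of_lt_of_le hlmin hl1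
  have hM0bound : ∀ y : ℝ, 0 ≤ y → y ≤ l → Real.exp ((1 + |lam|) * y) ≤ M0 := by
    intro y hy0 hyl
    rw [hM0]
    apply Real.exp_le_exp.mpr
    have h1 : |lam| ≤ Λmax := hlamΛ
    have h2 : y ≤ 1 / lmin := le_trans hyl hl2
    have h3 : (1 + |lam|) * y ≤ (1 + Λmax) * y := by
      apply mul_le_mul_of_nonneg_right (by linarith) hy0
    have h4 : (1 + Λmax) * y ≤ (1 + Λmax) * (1 / lmin) := by
      apply mul_le_mul_of_nonneg_left h2 (by positivity)
    calc (1 + |lam|) * y ≤ (1 + Λmax) * (1 / lmin) := by linarith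
      _ = (1 + Λmax) / lmin := by ring
  have husol : IsSol lam u := ⟨hu1, hu2, hu3⟩
  -- Build the basis C, S with the required bounds, by case analysis on the sign of lam.
  rcases lt_trichotomy lam 0 with hneg | hzero | hpos
  · -- lam < 0 : hyperbolic solutions
    set s : ℝ := Real.sqrt (-lam) with hs
    have hspos : 0 < s := Real.sqrt_pos.mpr (by linarith)
    have hssq : s * s = -lam := Real.mul_self_sqrt (by linarith)
    set C : ℝ → ℝ := fun y => Real.cosh (s * y) with hC
    set S : ℝ → ℝ := fun y => s⁻¹ * Real.sinh (s * y) with hS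
    have hdC : deriv C = fun y => s * Real.sinh (s * y) :=
      funext fun y => (hasDerivAt_cosh_mul s y).deriv
    have hdS : deriv S = fun y => Real.cosh (s * y) := by
      funext y
      have h1 : HasDerivAt S (s⁻¹ * (s * Real.cosh (s * y))) y :=
        (hasDerivAt_sinh_mul s y).const_mul _
      rw [h1.deriv, ← mul_assoc, inv_mul_cancel₀ hspos.ne', one_mul]
    have hCsol : IsSol lam C := by
      refine ⟨fun y => (hasDerivAt_cosh_mul s y).differentiableAt, ?_, ?_⟩
      · rw [hdC]; exact fun y => ((hasDerivAt_sinh_mul s y).const_mul s).differentiableAt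
      · intro y
        rw [hdC, ((hasDerivAt_sinh_mul s y).const_mul s).deriv]
        show s * (s * Real.cosh (s * y)) = -lam * Real.cosh (s * y)
        rw [← mul_assoc, hssq]
    have hSsol : IsSol lam S := by
      refine ⟨fun y => ((hasDerivAt_sinh_mul s y).const_mul _).differentiableAt, ?_, ?_⟩
      · rw [hdS]; exact fun y => (hasDerivAt_cosh_mul s y).differentiableAt
      · intro y
        rw [hdS, (hasDerivAt_cosh_mul s y).deriv]
        show s * Real.sinh (s * y) = -lam * (s⁻¹ * Real.sinh (s * y))
        rw [← hssq]
        field_simp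
    have hC0 : C 0 = 1 := by simp [hC]
    have hC0' : deriv C 0 = 0 := by rw [hdC]; simp
    have hS0 : S 0 = 0 := by simp [hS]
    have hS0' : deriv S 0 = 1 := by rw [hdS]; simp
    have hCl : |C l| ≤ B := by
      rw [hC]
      have h1 : |Real.cosh (s * l)| = Real.cosh (s * l) := abs_of_pos (Real.cosh_pos _)
      rw [h1, hB]
      rw [Real.cosh_le_cosh]
      have hsl : s ≤ Real.sqrt Λmax := by
        apply Real.sqrt_le_sqrt
        have := abs_le.mp hlamΛ
        linarith [this.1]
      rw [abs_of_nonneg (by positivity : (0:ℝ) ≤ s * l),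
        abs_of_nonneg (by positivity : (0:ℝ) ≤ Real.sqrt Λmax / lmin)]
      calc s * l ≤ Real.sqrt Λmax * l := mul_le_mul_of_nonneg_right hsl hlpos.le
        _ ≤ Real.sqrt Λmax * (1 / lmin) := mul_le_mul_of_nonneg_left hl2 hsΛ.le
        _ = Real.sqrt Λmax / lmin := by ring
    have hSl : δ ≤ |S l| := by
      have h1 : s * l ≤ Real.sinh (s * l) :=
        Real.self_le_sinh_iff.mpr (by positivity)
      have h2 : l ≤ S l := by
        have h2a : s⁻¹ * (s * l) ≤ s⁻¹ * Real.sinh (s * l) :=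
          mul_le_mul_of_nonneg_left h1 (by positivity)
        have heq : s⁻¹ * (s * l) = l := by field_simp
        calc l = s⁻¹ * (s * l) := heq.symm
          _ ≤ s⁻¹ * Real.sinh (s * l) := h2a
          _ = S l := rfl
      have h3 : 0 < S l := lt_of_lt_of_le hlpos h2
      rw [abs_of_pos h3]
      calc δ ≤ lmin := min_le_left _ _
        _ ≤ l := hl1
        _ ≤ S l := h2
    exact key_step lam l B δ M0 hlpos hB1 hδpos C S hCsol hSsol hC0 hC0' hS0 hS0'
      hCl hSl hM0bound u husol x hx
  · -- lam = 0 : affine solutions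
    subst hzero
    set C : ℝ → ℝ := fun _ => (1 : ℝ) with hC
    set S : ℝ → ℝ := fun y => y with hS
    have hdC : deriv C = fun _ => (0 : ℝ) := by funext y; simp [hC]
    have hdS : deriv S = fun _ => (1 : ℝ) := by funext y; simp [hS]
    have hCsol : IsSol 0 C := by
      refine ⟨differentiable_const _, ?_, ?_⟩
      · rw [hdC]; exact differentiable_const _
      · intro y; rw [hdC]; simp
    have hSsol : IsSol 0 S := by
      refine ⟨differentiable_id, ?_, ?_⟩
      · rw [hdS]; exact differentiable_const _
      · intro y; rw [hdS]; simp
    have hCl : |C l| ≤ B := by simp [hC]; exact hB1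
    have hSl : δ ≤ |S l| := by
      have hSeq : |S l| = l := abs_of_pos hlpos
      rw [hSeq]
      calc δ ≤ lmin := min_le_left _ _
        _ ≤ l := hl1
    exact key_step 0 l B δ M0 hlpos hB1 hδpos C S hCsol hSsol
      (by simp [hC]) (by rw [hdC]) (by simp [hS]) (by rw [hdS])
      hCl hSl hM0bound u husol x hx
  · -- lam > 0 : trigonometric solutions
    set s : ℝ := Real.sqrt lam with hs
    have hspos : 0 < s := Real.sqrt_pos.mpr hpos
    have hssq : s * s = lam := Real.mul_self_sqrt hpos.le
    set C : ℝ → ℝ := fun y => Real.cos (s * y) with hC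
    set S : ℝ → ℝ := fun y => s⁻¹ * Real.sin (s * y) with hS
    have hdC : deriv C = fun y => -(s * Real.sin (s * y)) :=
      funext fun y => (hasDerivAt_cos_mul s y).deriv
    have hdS : deriv S = fun y => Real.cos (s * y) := by
      funext y
      have h1 : HasDerivAt S (s⁻¹ * (s * Real.cos (s * y))) y :=
        (hasDerivAt_sin_mul s y).const_mul _
      rw [h1.deriv, ← mul_assoc, inv_mul_cancel₀ hspos.ne', one_mul]
    have hCsol : IsSol lam C := by
      refine ⟨fun y => (hasDerivAt_cos_mul s y).differentiableAt, ?_, ?_⟩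
      · rw [hdC]; exact fun y => ((hasDerivAt_sin_mul s y).const_mul s).differentiableAt.neg
      · intro y
        rw [hdC]
        have h1 : HasDerivAt (fun y => -(s * Real.sin (s * y)))
            (-(s * (s * Real.cos (s * y)))) y :=
          ((hasDerivAt_sin_mul s y).const_mul s).neg
        rw [h1.deriv]
        show -(s * (s * Real.cos (s * y))) = -lam * Real.cos (s * y)
        rw [← mul_assoc, hssq]; ring
    have hSsol : IsSol lam S := by
      refine ⟨fun y => ((hasDerivAt_sin_mul s y).const_mul _).differentiableAt, ?_, ?_⟩
      · rw [hdS]; exact fun y => (hasDerivAt_cos_mul s y).differentiableAt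
      · intro y
        rw [hdS, (hasDerivAt_cos_mul s y).deriv]
        show -(s * Real.sin (s * y)) = -lam * (s⁻¹ * Real.sin (s * y))
        rw [← hssq]
        field_simp
    have hC0 : C 0 = 1 := by simp [hC]
    have hC0' : deriv C 0 = 0 := by rw [hdC]; simp
    have hS0 : S 0 = 0 := by simp [hS]
    have hS0' : deriv S 0 = 1 := by rw [hdS]; simp
    have hCl : |C l| ≤ B := by
      rw [hC]
      calc |Real.cos (s * l)| ≤ 1 := Real.abs_cos_le_one _
        _ ≤ B := hB1
    have hSl : δ ≤ |S l| := by
      have h1 := sin_lower_bound lmin r Λmax l lam hlmin hl1 hl2 hpos hlamΛ hr hΛ hgap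
      calc δ ≤ min (2 / π * lmin)
            (2 / π * (lmin * r / A) / Real.sqrt Λmax) := min_le_right _ _
        _ ≤ |(Real.sqrt lam)⁻¹ * Real.sin (Real.sqrt lam * l)| := h1
        _ = |S l| := rfl
    exact key_step lam l B δ M0 hlpos hB1 hδpos C S hCsol hSsol hC0 hC0' hS0 hS0'
      hCl hSl hM0bound u husol x hx
end

section
/- Let K be an odd natural number with K ≥ 1, let n be an odd natural number, let l₀ > 0 be a real number, and let m be a natural number. Suppose u : ZMod K → (ℝ → ℝ) and v : Fin (m+1) → (ℝ → ℝ) assign twice differentiable functions each satisfying w''(x) = -(n·π/l₀)² · w(x) for all x ∈ ℝ; suppose the cyclic continuity condition uᵢ(l₀) = u_{i+1}(0) holds for all i ∈ ZMod K; suppose v₀(0) = u₀(0) (the path is attached to a vertex of the cycle); and suppose vⱼ(l₀) = v_{j+1}(0) for all j < m. Then vⱼ(0) = 0 and vⱼ(l₀) = 0 for all j; in particular the value at the far endpoint of the path, v_m(l₀), is zero. -/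
/-- Any solution of `w'' = -ω² w` satisfies `w(x) cos(ωx) - w'(x)/ω sin(ωx) = w(0)`. -/
lemma flip_aux (ω : ℝ) (hω : ω ≠ 0) (w : ℝ → ℝ) (hw : Differentiable ℝ w)
    (hw' : Differentiable ℝ (deriv w))
    (hODE : ∀ x, deriv (deriv w) x = -(ω ^ 2) * w x) (y : ℝ) :
    w y * Real.cos (ω * y) - deriv w y / ω * Real.sin (ω * y) = w 0 := by
  set A : ℝ → ℝ := fun x => w x * Real.cos (ω * x) - deriv w x / ω * Real.sin (ω * x) with hA
  have key : ∀ x : ℝ, HasDerivAt A 0 x := by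
    intro x
    have hlin : HasDerivAt (fun x : ℝ => ω * x) ω x := by
      simpa using (hasDerivAt_id x).const_mul ω
    have hcos : HasDerivAt (fun x : ℝ => Real.cos (ω * x)) (-Real.sin (ω * x) * ω) x :=
      (Real.hasDerivAt_cos (ω * x)).comp x hlin
    have hsin : HasDerivAt (fun x : ℝ => Real.sin (ω * x)) (Real.cos (ω * x) * ω) x :=
      (Real.hasDerivAt_sin (ω * x)).comp x hlin
    have h1 : HasDerivAt A
        ((deriv w x * Real.cos (ω * x) + w x * (-Real.sin (ω * x) * ω))
        - ((deriv (deriv w) x / ω) * Real.sin (ω * x)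
          + deriv w x / ω * (Real.cos (ω * x) * ω))) x :=
      (((hw x).hasDerivAt.mul hcos)).sub
        ((((hw' x).hasDerivAt.div_const ω)).mul hsin)
    have : (deriv w x * Real.cos (ω * x) + w x * (-Real.sin (ω * x) * ω))
        - ((deriv (deriv w) x / ω) * Real.sin (ω * x)
          + deriv w x / ω * (Real.cos (ω * x) * ω)) = 0 := by
      rw [hODE x]; field_simp; ring
    rwa [this] at h1
  have hconst : A y = A 0 :=
    is_const_of_deriv_eq_zero (fun x => (key x).differentiableAt)
      (fun x => (key x).deriv) y 0
  simpa [hA] using hconst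

/-- For `ω = nπ/l₀` with `n` odd, a solution of `w'' = -ω² w` satisfies `w(l₀) = -w(0)`. -/
lemma edgeFlip (n : ℕ) (hn : Odd n) (l₀ : ℝ) (hl₀ : 0 < l₀) (w : ℝ → ℝ)
    (hw : Differentiable ℝ w) (hw' : Differentiable ℝ (deriv w))
    (hODE : ∀ x, deriv (deriv w) x = -((n * Real.pi / l₀) ^ 2) * w x) :
    w l₀ = -w 0 := by
  have hn1 : (1 : ℕ) ≤ n := hn.pos
  have hω : (n * Real.pi / l₀ : ℝ) ≠ 0 := by
    have : (0 : ℝ) < n * Real.pi / l₀ := by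
      apply div_pos _ hl₀
      exact mul_pos (by exact_mod_cast hn1) Real.pi_pos
    linarith
  have h := flip_aux (n * Real.pi / l₀) hω w hw hw' hODE l₀
  have harg : (n * Real.pi / l₀) * l₀ = (n : ℝ) * Real.pi := by
    field_simp
  rw [harg, Real.sin_nat_mul_pi] at h
  have hcos : Real.cos ((n : ℝ) * Real.pi) = -1 := by
    have := Real.cos_add_nat_mul_pi 0 n
    simpa [Odd.neg_one_pow hn] using this
  rw [hcos] at h
  linarith

/-- Combination of the two steps of Theorem 2: a solution of `-u'' = (nπ/l₀)² u` (n odd)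
on an odd cycle of `K` edges, continuous at the vertices, together with a solution on a
path of `m+1` edges attached to a vertex of the cycle, vanishes at every vertex of the
path; in particular at the far endpoint of the path. -/
theorem cycle_path_vanishing (K : ℕ) (hK1 : 1 ≤ K) (hK : Odd K) (n : ℕ) (hn : Odd n)
    (l₀ : ℝ) (hl₀ : 0 < l₀) (m : ℕ)
    (u : ZMod K → ℝ → ℝ) (v : Fin (m + 1) → ℝ → ℝ)
    (hudiff : ∀ i, Differentiable ℝ (u i))
    (hudiff' : ∀ i, Differentiable ℝ (deriv (u i)))
    (huODE : ∀ i, ∀ x : ℝ, deriv (deriv (u i)) x = -((n * Real.pi / l₀) ^ 2) * u i x)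
    (hvdiff : ∀ j, Differentiable ℝ (v j))
    (hvdiff' : ∀ j, Differentiable ℝ (deriv (v j)))
    (hvODE : ∀ j, ∀ x : ℝ, deriv (deriv (v j)) x = -((n * Real.pi / l₀) ^ 2) * v j x)
    (hucont : ∀ i : ZMod K, u i l₀ = u (i + 1) 0)
    (hattach : v 0 0 = u 0 0)
    (hvcont : ∀ j : Fin m, v j.castSucc l₀ = v j.succ 0) :
    (∀ j : Fin (m + 1), v j 0 = 0 ∧ v j l₀ = 0) ∧ v (Fin.last m) l₀ = 0 := by
  have huflip : ∀ i : ZMod K, u i l₀ = -u i 0 :=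
    fun i => edgeFlip n hn l₀ hl₀ (u i) (hudiff i) (hudiff' i) (huODE i)
  have hvflip : ∀ j, v j l₀ = -v j 0 :=
    fun j => edgeFlip n hn l₀ hl₀ (v j) (hvdiff j) (hvdiff' j) (hvODE j)
  -- on the cycle: u (k) 0 = (-1)^k * u 0 0
  have hcyc : ∀ k : ℕ, u (k : ZMod K) 0 = (-1 : ℝ) ^ k * u 0 0 := by
    intro k
    induction k with
    | zero => simp
    | succ k ih =>
      have := hucont (k : ZMod K)
      rw [huflip (k : ZMod K), ih] at this
      push_cast
      rw [← this]
      ring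
  have hu00 : u 0 0 = 0 := by
    have := hcyc K
    rw [ZMod.natCast_self, Odd.neg_one_pow hK] at this
    linarith
  -- path vanishing
  have hv0 : ∀ j : Fin (m + 1), v j 0 = 0 := by
    intro j
    induction j using Fin.induction with
    | zero => rw [hattach, hu00]
    | succ i ih =>
      have := hvcont i
      rw [hvflip i.castSucc, ih] at this
      linarith
  have hboth : ∀ j : Fin (m + 1), v j 0 = 0 ∧ v j l₀ = 0 := by
    intro j
    refine ⟨hv0 j, ?_⟩
    rw [hvflip j, hv0 j, neg_zero]
  exact ⟨hboth, (hboth (Fin.last m)).2⟩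
end
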